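/- For every q* > 0, the super-level set {ℓ ∈ ℝ¹⁰ : Q_econ(e^{ℓ₁},…,e^{ℓ₁₀}) ≥ q*} is a convex subset of ℝ¹⁰. -/

import Mathlib

/-- The annuity (amortization) factor `φ(i, τL)` with the interest rate `i` in percent. -/
noncomputable def annuity (i tL : ℝ) : ℝ :=
  0.01 * i * (1 + 0.01 * i) ^ tL / ((1 + 0.01 * i) ^ tL - 1)

/-- The utilization factor `U = X / (X + p·τ)`. -/
noncomputable def util (p tau X : ℝ) : ℝ := X / (X + p * tau)

/-- The economic gain factor `Q_econ` of the fusion power plant model,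
with `α = 8.76×10⁻³` and `β = 31.5`. -/
noncomputable def Qecon (p tau tL E X eta cY mS mF i : ℝ) : ℝ :=
  (8.76e-3 * E * eta * p * util p tau X) /
    (31.5 * cY * p * util p tau X + mS * (p / X) * util p tau X + mF * annuity i tL)

/-- `Q_econ` as a function of the vector of the ten parameters
`(p, τ, τL, E, X, η, cY, mS, mF, i)`. -/
noncomputable def QeconV (θ : Fin 10 → ℝ) : ℝ :=
  Qecon (θ 0) (θ 1) (θ 2) (θ 3) (θ 4) (θ 5) (θ 6) (θ 7) (θ 8) (θ 9)

/-! With every parameter written as `exp ℓⱼ`, `α / Q_econ` is the cost ratio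
`β cY/(Eη) + mS/(EηX) + φ mF/(pEη) + φ mF τ/(EηX)` (using `1/(pU) = 1/p + τ/X`), a sum of
exponentials of linear forms in `ℓ`, two of them shifted by `log φ`. The annuity factor is
log-log-convex: `log φ(eᵘ, eᵗ) = log 0.01 + u - h (t + log log (1 + 0.01 eᵘ))` with
`h s = log (1 - exp (-eˢ))` concave and increasing and `u ↦ log log (1 + 0.01 eᵘ)` concave.
Hence the cost ratio is convex in `ℓ`, and `q* ≤ Q_econ` is its sublevel set at `α / q*`. -/

open Real Set

section Composition

variable {E : Type*} [AddCommGroup E] [Module ℝ E] {s : Set E} {f : E → ℝ} {g : ℝ → ℝ}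

theorem ConvexOn.comp_of_monotone (hg : ConvexOn ℝ univ g) (hg' : Monotone g)
    (hf : ConvexOn ℝ s f) : ConvexOn ℝ s (g ∘ f) :=
  ⟨hf.1, fun _ hx _ hy _ _ ha hb hab =>
    (hg' (hf.2 hx hy ha hb hab)).trans (hg.2 trivial trivial ha hb hab)⟩

theorem ConcaveOn.comp_of_monotone (hg : ConcaveOn ℝ univ g) (hg' : Monotone g)
    (hf : ConcaveOn ℝ s f) : ConcaveOn ℝ s (g ∘ f) :=
  ⟨hf.1, fun _ hx _ hy _ _ ha hb hab =>
    (hg.2 trivial trivial ha hb hab).trans (hg' (hf.2 hx hy ha hb hab))⟩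

end Composition

theorem concaveOn_log_log_one_add_mul_exp {c : ℝ} (hc : 0 < c) :
    ConcaveOn ℝ univ (fun u => log (log (1 + c * exp u))) := by
  have hx (u : ℝ) : 0 < c * exp u := by positivity
  have hL (u : ℝ) : 0 < log (1 + c * exp u) := log_pos (by linarith [hx u])
  have hdx (u : ℝ) : HasDerivAt (fun u => c * exp u) (c * exp u) u :=
    (hasDerivAt_exp u).const_mul c
  have hdL (u : ℝ) :
      HasDerivAt (fun u => log (1 + c * exp u)) (c * exp u / (1 + c * exp u)) u :=
    ((hdx u).const_add 1).log (by linarith [hx u])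
  have hdσ (u : ℝ) : HasDerivAt (fun u => c * exp u / (1 + c * exp u))
      (c * exp u / (1 + c * exp u) ^ 2) u := by
    have hne : 1 + c * exp u ≠ 0 := by linarith [hx u]
    exact ((hdx u).div ((hdx u).const_add 1) hne).congr_deriv (by ring)
  refine concaveOn_of_hasDerivWithinAt2_nonpos convex_univ
    (f' := fun u => c * exp u / (1 + c * exp u) / log (1 + c * exp u))
    (f'' := fun u => (c * exp u / (1 + c * exp u) ^ 2 * log (1 + c * exp u) -
      c * exp u / (1 + c * exp u) * (c * exp u / (1 + c * exp u))) / log (1 + c * exp u) ^ 2)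
    (fun u _ => ((hdL u).log (hL u).ne').continuousAt.continuousWithinAt)
    (fun u _ => ((hdL u).log (hL u).ne').hasDerivWithinAt)
    (fun u _ => ((hdσ u).div (hdL u) (hL u).ne').hasDerivWithinAt) fun u _ => ?_
  set x := c * exp u
  have hnum : x / (1 + x) ^ 2 * log (1 + x) - x / (1 + x) * (x / (1 + x)) =
      x / (1 + x) ^ 2 * (log (1 + x) - x) := by
    have hne : 1 + x ≠ 0 := by linarith [hx u]
    field_simp
  rw [hnum]
  refine div_nonpos_of_nonpos_of_nonneg (mul_nonpos_of_nonneg_of_nonpos (by positivity) ?_)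
    (sq_nonneg _)
  linarith [log_le_sub_one_of_pos (by linarith [hx u] : 0 < 1 + x)]

theorem one_sub_exp_neg_exp_pos (s : ℝ) : 0 < 1 - exp (-exp s) :=
  sub_pos.2 (exp_lt_one_iff.2 (neg_lt_zero.2 (exp_pos s)))

theorem monotone_log_one_sub_exp_neg_exp : Monotone (fun s => log (1 - exp (-exp s))) := by
  intro a b hab
  have := one_sub_exp_neg_exp_pos a
  dsimp only
  gcongr

theorem concaveOn_log_one_sub_exp_neg_exp :
    ConcaveOn ℝ univ (fun s => log (1 - exp (-exp s))) := by
  have hB (s : ℝ) : 1 - exp (-exp s) ≠ 0 := (one_sub_exp_neg_exp_pos s).ne'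
  have hdB (s : ℝ) : HasDerivAt (fun s => 1 - exp (-exp s)) (exp s * exp (-exp s)) s := by
    refine ((hasDerivAt_exp s).neg.exp.const_sub 1).congr_deriv ?_
    rw [Pi.neg_apply]
    ring
  have hdy (s : ℝ) : HasDerivAt (fun s => exp s * exp (-exp s))
      (exp s * exp (-exp s) * (1 - exp s)) s := by
    refine ((hasDerivAt_exp s).mul (hasDerivAt_exp s).neg.exp).congr_deriv ?_
    rw [Pi.neg_apply]
    ring
  refine concaveOn_of_hasDerivWithinAt2_nonpos convex_univ
    (f' := fun s => exp s * exp (-exp s) / (1 - exp (-exp s)))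
    (f'' := fun s => (exp s * exp (-exp s) * (1 - exp s) * (1 - exp (-exp s)) -
      exp s * exp (-exp s) * (exp s * exp (-exp s))) / (1 - exp (-exp s)) ^ 2)
    (fun s _ => ((hdB s).log (hB s)).continuousAt.continuousWithinAt)
    (fun s _ => ((hdB s).log (hB s)).hasDerivWithinAt)
    (fun s _ => ((hdy s).div (hdB s) (hB s)).hasDerivWithinAt) fun s _ => ?_
  set y := exp s
  have hnum : y * exp (-y) * (1 - y) * (1 - exp (-y)) - y * exp (-y) * (y * exp (-y)) =
      -(y * exp (-y) * (y + exp (-y) - 1)) := by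
    ring
  rw [hnum]
  refine div_nonpos_of_nonpos_of_nonneg (neg_nonpos.2 (mul_nonneg (by positivity) ?_))
    (sq_nonneg _)
  linarith [add_one_le_exp (-y)]

theorem annuity_eq_div_one_sub_rpow {i t : ℝ} (hi : 0 < i) (ht : t ≠ 0) :
    annuity i t = 0.01 * i / (1 - (1 + 0.01 * i) ^ (-t)) := by
  have ha : 1 < 1 + 0.01 * i := by linarith
  have hat0 : (1 + 0.01 * i) ^ t ≠ 0 := (rpow_pos_of_pos (by linarith) t).ne'
  have hat1 : (1 + 0.01 * i) ^ t - 1 ≠ 0 := fun h =>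
    ht ((rpow_right_inj (by linarith) ha.ne').1 ((sub_eq_zero.1 h).trans (rpow_zero _).symm))
  rw [annuity, rpow_neg (by linarith)]
  field_simp

theorem annuity_pos {i t : ℝ} (hi : 0 < i) (ht : 0 < t) : 0 < annuity i t := by
  rw [annuity_eq_div_one_sub_rpow hi ht.ne']
  have := rpow_lt_one_of_one_lt_of_neg (by linarith : 1 < 1 + 0.01 * i) (neg_lt_zero.2 ht)
  exact div_pos (by positivity) (by linarith)

theorem log_annuity_exp_exp (u t : ℝ) :
    log (annuity (exp u) (exp t)) =
      log 0.01 + u - log (1 - exp (-exp (t + log (log (1 + 0.01 * exp u))))) := by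
  have ha : 1 < 1 + 0.01 * exp u := by linarith [exp_pos u]
  have hpow :
      (1 + 0.01 * exp u) ^ (-exp t) = exp (-exp (t + log (log (1 + 0.01 * exp u)))) := by
    rw [rpow_def_of_pos (by linarith), exp_add, exp_log (log_pos ha)]
    ring_nf
  rw [annuity_eq_div_one_sub_rpow (exp_pos u) (exp_pos t).ne', hpow,
    log_div (by positivity) (one_sub_exp_neg_exp_pos _).ne', log_mul (by norm_num) (exp_pos u).ne',
    log_exp]

theorem convexOn_log_annuity_exp :
    ConvexOn ℝ univ (fun v : ℝ × ℝ => log (annuity (exp v.1) (exp v.2))) := by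
  simp only [log_annuity_exp_exp]
  have hinner : ConcaveOn ℝ univ (fun v : ℝ × ℝ => v.2 + log (log (1 + 0.01 * exp v.1))) :=
    ((LinearMap.snd ℝ ℝ ℝ).concaveOn convex_univ).add
      ((concaveOn_log_log_one_add_mul_exp (by norm_num)).comp_linearMap (LinearMap.fst ℝ ℝ ℝ))
  exact ((convexOn_const _ convex_univ).add ((LinearMap.fst ℝ ℝ ℝ).convexOn convex_univ)).sub
    (concaveOn_log_one_sub_exp_neg_exp.comp_of_monotone monotone_log_one_sub_exp_neg_exp hinner)

theorem Qecon_eq_div {p tau tL E X eta cY mS mF i : ℝ} (hp : p ≠ 0) (hX : X ≠ 0)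
    (hpX : X + p * tau ≠ 0) (hE : E ≠ 0) (heta : eta ≠ 0) :
    Qecon p tau tL E X eta cY mS mF i = 8.76e-3 / (31.5 * cY / (E * eta) + mS / (E * eta * X) +
      mF * annuity i tL / (p * E * eta) + mF * annuity i tL * tau / (E * eta * X)) := by
  have hcost : 31.5 * cY / (E * eta) + mS / (E * eta * X) + mF * annuity i tL / (p * E * eta) +
      mF * annuity i tL * tau / (E * eta * X) =
      (31.5 * cY * p * util p tau X + mS * (p / X) * util p tau X + mF * annuity i tL) /
        (E * eta * p * util p tau X) := by
    unfold util
    field_simp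
    ring
  rw [Qecon, hcost, div_div_eq_mul_div]
  ring

noncomputable def costRatioExp (ℓ : Fin 10 → ℝ) : ℝ :=
  31.5 * exp (ℓ 6 - ℓ 3 - ℓ 5) + exp (ℓ 7 - ℓ 3 - ℓ 5 - ℓ 4) +
    exp (log (annuity (exp (ℓ 9)) (exp (ℓ 2))) + (ℓ 8 - ℓ 0 - ℓ 3 - ℓ 5)) +
    exp (log (annuity (exp (ℓ 9)) (exp (ℓ 2))) + (ℓ 8 + ℓ 1 - ℓ 3 - ℓ 5 - ℓ 4))

theorem costRatioExp_pos (ℓ : Fin 10 → ℝ) : 0 < costRatioExp ℓ := by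
  unfold costRatioExp
  positivity

theorem QeconV_exp (ℓ : Fin 10 → ℝ) :
    QeconV (fun j => exp (ℓ j)) = 8.76e-3 / costRatioExp ℓ := by
  rw [QeconV, Qecon_eq_div (exp_ne_zero _) (exp_ne_zero _) (by positivity) (exp_ne_zero _)
    (exp_ne_zero _)]
  simp only [costRatioExp, exp_add, exp_sub, exp_log (annuity_pos (exp_pos _) (exp_pos _))]
  ring

theorem convexOn_costRatioExp : ConvexOn ℝ univ costRatioExp := by
  let coord (j : Fin 10) : (Fin 10 → ℝ) →ₗ[ℝ] ℝ := LinearMap.proj j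
  have hexp {f : (Fin 10 → ℝ) → ℝ} (hf : ConvexOn ℝ univ f) :
      ConvexOn ℝ univ (fun ℓ => exp (f ℓ)) :=
    convexOn_exp.comp_of_monotone exp_monotone hf
  have hΦ :
      ConvexOn ℝ univ (fun ℓ : Fin 10 → ℝ => log (annuity (exp (ℓ 9)) (exp (ℓ 2)))) :=
    convexOn_log_annuity_exp.comp_linearMap ((coord 9).prod (coord 2))
  refine (((hexp ?_).smul (by norm_num)).add (hexp ?_)).add (hexp ?_) |>.add (hexp ?_)
  · exact (coord 6 - coord 3 - coord 5).convexOn convex_univ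
  · exact (coord 7 - coord 3 - coord 5 - coord 4).convexOn convex_univ
  · exact hΦ.add ((coord 8 - coord 0 - coord 3 - coord 5).convexOn convex_univ)
  · exact hΦ.add ((coord 8 + coord 1 - coord 3 - coord 5 - coord 4).convexOn convex_univ)

/-- **Convexity of viability super-level sets in log-coordinates.** For every
`q* > 0`, the set `{ℓ ∈ ℝ¹⁰ : Q_econ(e^{ℓ₁},…,e^{ℓ₁₀}) ≥ q*}` is convex. -/
theorem qecon_superlevel_convex (qstar : ℝ) (hq : 0 < qstar) :
    Convex ℝ {ℓ : Fin 10 → ℝ | qstar ≤ QeconV (fun j => Real.exp (ℓ j))} := by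
  convert convexOn_costRatioExp.convex_le (8.76e-3 / qstar) using 1
  ext ℓ
  simp only [sep_univ, mem_ofPred_eq, QeconV_exp, le_div_comm₀ hq (costRatioExp_pos ℓ)]
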